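/- Every locally σ-compact Hausdorff rectifiable space with a bc-base is locally compact or zero-dimensional. -/

import Mathlib

/-!
A rectifiable space is homogeneous and regular. If some point has a compact neighbourhood,
homogeneity moves it to every point. Otherwise no compact set contains a nontrivial continuum:
if `a ≠ b` lie in a compact connected `C` and `U` is a basic neighbourhood of `e` whose closure
misses `q (b, a)`, then every `u` near `a` is `p (w, d)` with `w ∈ C` and `d ∈ frontier U`, so
`p '' (C ×ˢ frontier U)` would be a compact neighbourhood of `a`. Compact sets are therefore
zero-dimensional, which allows pushing the compact frontier of an open set off any given compact
set. Covering a neighbourhood of `x` by compacta `K n`, one pushes the frontier off `K 0`, `K 1`,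
… in turn, each time changing the set only inside a shrinking collar of the previous frontier;
the intersection of the resulting neighbourhoods of `x` is clopen.
-/

open Set Filter Topology TopologicalSpace

section

variable {X : Type*} [TopologicalSpace X]

theorem Finset.frontier_biUnion_subset {ι : Type*} (s : Finset ι) (f : ι → Set X) :
    frontier (⋃ i ∈ s, f i) ⊆ ⋃ i ∈ s, frontier (f i) := by
  rintro y ⟨hcl, hint⟩
  rw [s.closure_biUnion] at hcl
  obtain ⟨i, hi, hy⟩ := mem_iUnion₂.1 hcl
  exact mem_iUnion₂.2 ⟨i, hi, hy, fun h =>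
    hint (interior_mono (subset_iUnion₂ (s := fun i _ => f i) i hi) h)⟩

theorem IsPreconnected.inter_frontier_nonempty {s t : Set X} (hs : IsPreconnected s)
    (hst : (s ∩ t).Nonempty) (hst' : (s \ t).Nonempty) : (s ∩ frontier t).Nonempty := by
  by_contra h
  have hsub : s ⊆ interior t ∪ (closure t)ᶜ := fun y hy => by
    by_contra hy'
    simp only [mem_union, mem_compl_iff, not_or, not_not] at hy'
    exact h ⟨y, hy, hy'.2, hy'.1⟩
  rcases hs.subset_or_subset isOpen_interior isClosed_closure.isOpen_compl
      (disjoint_compl_right.mono_left interior_subset_closure) hsub with h' | h'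
  · obtain ⟨y, hys, hyt⟩ := hst'
    exact hyt (interior_subset (h' hys))
  · obtain ⟨y, hys, hyt⟩ := hst
    exact h' hys (subset_closure hyt)

theorem frontier_diff_closure_subset {V T : Set X} (hT : IsOpen T) (hVT : frontier V ⊆ T) :
    frontier (V \ closure T) ⊆ frontier T := by
  rw [sdiff_eq]
  refine (frontier_inter_subset _ _).trans (union_subset ?_ ?_)
  · rintro y ⟨hyV, hy⟩
    rw [closure_compl] at hy
    exact absurd (hT.subset_interior_closure (hVT hyV)) hy
  · rw [frontier_compl]
    exact inter_subset_right.trans frontier_closure_subset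

theorem weaklyLocallyCompactSpace_of_homogeneous (hhom : ∀ x y : X, ∃ f : X ≃ₜ X, f x = y)
    {x : X} {C : Set X} (hC : IsCompact C) (hCx : C ∈ 𝓝 x) : WeaklyLocallyCompactSpace X where
  exists_compact_mem_nhds y := by
    obtain ⟨f, rfl⟩ := hhom x y
    exact ⟨f '' C, hC.image f.continuous, f.isOpenMap.image_mem_nhds hCx⟩

theorem TopologicalSpace.IsTopologicalBasis.exists_isOpen_closure_subset_isCompact_frontier
    [RegularSpace X] {𝓑 : Set (Set X)} (hB : IsTopologicalBasis 𝓑)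
    (hbc : ∀ U ∈ 𝓑, IsCompact (frontier U)) {K S : Set X} (hK : IsCompact K) (hS : IsOpen S)
    (hKS : K ⊆ S) : ∃ V, IsOpen V ∧ K ⊆ V ∧ closure V ⊆ S ∧ IsCompact (frontier V) := by
  have hsmall : ∀ x ∈ K, ∃ U ∈ 𝓑, x ∈ U ∧ closure U ⊆ S := fun x hx =>
    hB.exists_closure_subset (hS.mem_nhds (hKS hx))
  choose! U hU𝓑 hxU hUS using hsmall
  obtain ⟨t, htK, hKt⟩ := hK.elim_nhds_subcover U fun x hx =>
    (hB.isOpen (hU𝓑 x hx)).mem_nhds (hxU x hx)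
  refine ⟨⋃ x ∈ t, U x, isOpen_biUnion fun x hx => hB.isOpen (hU𝓑 x (htK x hx)), hKt, ?_, ?_⟩
  · rw [t.closure_biUnion]
    exact iUnion₂_subset fun x hx => hUS x (htK x hx)
  · exact (t.isCompact_biUnion fun x hx => hbc _ (hU𝓑 x (htK x hx))).of_isClosed_subset
      isClosed_frontier (t.frontier_biUnion_subset U)

theorem IsCompact.exists_isCompact_split [T2Space X] {K B S : Set X} (hK : IsCompact K)
    (htd : IsTotallyDisconnected K) (hB : IsClosed B) (hS : IsOpen S) (hBS : B ∩ K ⊆ S) :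
    ∃ T, IsCompact T ∧ IsCompact (K \ T) ∧ B ∩ K ⊆ T ∧ T ⊆ S := by
  have : CompactSpace K := isCompact_iff_compactSpace.mp hK
  have : TotallyDisconnectedSpace K := totallyDisconnectedSpace_subtype_iff.mpr htd
  obtain ⟨C, hC, hBC, hCS⟩ := exists_clopen_of_closed_subset_open
    (hB.preimage continuous_subtype_val) (hS.preimage continuous_subtype_val)
    (fun y hy => hBS ⟨hy, y.2⟩ : ((↑) : K → X) ⁻¹' B ⊆ (↑) ⁻¹' S)
  refine ⟨(↑) '' C, hC.isClosed.isCompact.image continuous_subtype_val, ?_,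
    fun y hy => ⟨⟨y, hy.2⟩, hBC hy.1, rfl⟩, image_subset_iff.mpr hCS⟩
  have hcompl := image_compl_eq_range_sdiff_image Subtype.val_injective C
  rw [Subtype.range_coe] at hcompl
  rw [← hcompl]
  exact hC.compl.isClosed.isCompact.image continuous_subtype_val

def HasCompactFrontierNhdsAvoiding (X : Type*) [TopologicalSpace X] : Prop :=
  ∀ ⦃B S K : Set X⦄, IsCompact B → IsOpen S → B ⊆ S → IsCompact K →
    ∃ V, IsOpen V ∧ B ⊆ V ∧ closure V ⊆ S ∧ IsCompact (frontier V) ∧ Disjoint (frontier V) K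

theorem hasCompactFrontierNhdsAvoiding_of_isTopologicalBasis [T2Space X] [RegularSpace X]
    {𝓑 : Set (Set X)} (hB : IsTopologicalBasis 𝓑) (hbc : ∀ U ∈ 𝓑, IsCompact (frontier U))
    (htd : ∀ K : Set X, IsCompact K → IsTotallyDisconnected K) :
    HasCompactFrontierNhdsAvoiding X := by
  intro B S K hBc hS hBS hK
  obtain ⟨T, hTc, hKTc, hBT, hTS⟩ :=
    hK.exists_isCompact_split (htd K hK) hBc.isClosed hS fun y hy => hBS hy.1
  -- Inside `S \ (K \ T)`, the only points of `K` are those of `T`, which lie inside `V`.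
  obtain ⟨V, hVo, hBTV, hVS, hVfr⟩ := hB.exists_isOpen_closure_subset_isCompact_frontier hbc
    (hBc.union hTc) (hS.sdiff hKTc.isClosed)
    (union_subset (fun y hy => ⟨hBS hy, fun h => h.2 (hBT ⟨hy, h.1⟩)⟩)
      fun y hy => ⟨hTS hy, fun h => h.2 hy⟩)
  refine ⟨V, hVo, subset_union_left.trans hBTV, hVS.trans sdiff_subset, hVfr, ?_⟩
  refine disjoint_left.mpr fun y hyV hyK => ?_
  have hyT : y ∈ T := by_contra fun h => (hVS (frontier_subset_closure hyV)).2 ⟨hyK, h⟩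
  exact disjoint_frontier_iff_isOpen.mpr hVo |>.ne_of_mem hyV (hBTV (Or.inr hyT)) rfl

theorem isClopen_iInter_of_frontier_disjoint {V Z L : ℕ → Set X} (hVo : ∀ n, IsOpen (V n))
    (hV : Antitone V) (hZ : Antitone Z) (hVZ : ∀ n, V n \ Z n ⊆ V (n + 1))
    (hL : closure (V 0) ⊆ ⋃ n, L n) (hVL : ∀ n, Disjoint (frontier (V n)) (L n))
    (hZL : ∀ n, Disjoint (closure (Z n)) (L n)) : IsClopen (⋂ n, V n) := by
  have hstable : ∀ n, V n \ closure (Z n) ⊆ ⋂ m, V m := by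
    intro n y hy
    refine mem_iInter.mpr fun m => ?_
    rcases le_total m n with hmn | hnm
    · exact hV hmn hy.1
    · induction m, hnm using Nat.le_induction with
      | base => exact hy.1
      | succ m hnm ih =>
        exact hVZ m ⟨ih, fun hz => hy.2 (subset_closure (hZ hnm hz))⟩
  have hcover : ∀ y ∈ closure (⋂ n, V n), ∃ n, y ∈ L n ∧ y ∉ closure (Z n) := fun y hy =>
    have ⟨n, hn⟩ := mem_iUnion.mp (hL (closure_mono (iInter_subset V 0) hy))
    ⟨n, hn, disjoint_right.mp (hZL n) hn⟩
  constructor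
  · refine closure_subset_iff_isClosed.mp fun z hz => ?_
    obtain ⟨n, hzL, hzZ⟩ := hcover z hz
    have hzV : z ∈ V n := by
      by_contra h
      exact disjoint_right.mp (hVL n) hzL ⟨closure_mono (iInter_subset V n) hz,
        by rwa [(hVo n).interior_eq]⟩
    exact hstable n ⟨hzV, hzZ⟩
  · refine isOpen_iff_mem_nhds.mpr fun y hy => ?_
    obtain ⟨n, -, hyZ⟩ := hcover y (subset_closure hy)
    exact mem_of_superset (((hVo n).sdiff isClosed_closure).mem_nhds ⟨mem_iInter.mp hy n, hyZ⟩)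
      (hstable n)

def IsCollaredNhd (x : X) (V Z : Set X) : Prop :=
  IsOpen V ∧ x ∈ V ∧ IsCompact (frontier V) ∧ IsOpen Z ∧ frontier V ⊆ Z ∧ x ∉ closure Z

namespace HasCompactFrontierNhdsAvoiding

variable [T2Space X] (hX : HasCompactFrontierNhdsAvoiding X)
include hX

theorem exists_isCollaredNhd (x : X) {S : Set X} (hS : IsOpen S) (hxS : x ∈ S) :
    ∃ V Z, IsCollaredNhd x V Z ∧ closure V ⊆ S := by
  obtain ⟨V, hVo, hxV, hVS, hVfr, -⟩ := hX isCompact_singleton hS (singleton_subset_iff.mpr hxS)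
    isCompact_empty
  have hxfr : frontier V ⊆ {x}ᶜ := fun y hy hyx =>
    disjoint_frontier_iff_isOpen.mpr hVo |>.ne_of_mem hy (hxV rfl) hyx
  obtain ⟨Z, hZo, hVZ, hZx, -, -⟩ := hX hVfr isClosed_singleton.isOpen_compl hxfr isCompact_empty
  exact ⟨V, Z, ⟨hVo, hxV rfl, hVfr, hZo, hVZ, fun h => hZx h rfl⟩, hVS⟩

/-- Cutting `closure T` out of `V`, for `T` a neighbourhood of `frontier V` inside `Z`, replaces
the frontier of `V` by one that misses `K`; the new collar is then cut out of `Z`. -/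
theorem exists_isCollaredNhd_shrink {x : X} {V Z K : Set X} (hVZ : IsCollaredNhd x V Z)
    (hK : IsCompact K) :
    ∃ V' Z', IsCollaredNhd x V' Z' ∧ V' ⊆ V ∧ V \ Z ⊆ V' ∧ Z' ⊆ Z ∧
      Disjoint (frontier V') K ∧ Disjoint (closure Z') K := by
  obtain ⟨hVo, hxV, hVfr, hZo, hfrZ, hxZ⟩ := hVZ
  obtain ⟨T, hTo, hfrT, hTZ, hTfr, hTK⟩ := hX hVfr hZo hfrZ hK
  have hfr' : frontier (V \ closure T) ⊆ frontier T := frontier_diff_closure_subset hTo hfrT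
  have hxV' : x ∈ V \ closure T := ⟨hxV, fun h => hxZ (subset_closure (hTZ h))⟩
  have hVo' : IsOpen (V \ closure T) := hVo.sdiff isClosed_closure
  have hfrS : frontier (V \ closure T) ⊆ Z \ insert x K := fun y hy =>
    ⟨hTZ (frontier_subset_closure (hfr' hy)), by
      rintro (rfl | hyK)
      · exact disjoint_frontier_iff_isOpen.mpr hVo' |>.ne_of_mem hy hxV' rfl
      · exact disjoint_left.mp hTK (hfr' hy) hyK⟩
  obtain ⟨Z', hZo', hfrZ', hZS, -, -⟩ := hX (hTfr.of_isClosed_subset isClosed_frontier hfr')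
    (hZo.sdiff (hK.insert x).isClosed) hfrS isCompact_empty
  refine ⟨V \ closure T, Z', ⟨hVo', hxV', hTfr.of_isClosed_subset isClosed_frontier hfr', hZo',
    hfrZ', fun h => (hZS h).2 (mem_insert x K)⟩, sdiff_subset,
    fun y hy => ⟨hy.1, fun h => hy.2 (hTZ h)⟩, subset_closure.trans (hZS.trans sdiff_subset),
    hTK.mono_left hfr', disjoint_left.mpr fun y hy hyK => (hZS hy).2 (mem_insert_of_mem x hyK)⟩

theorem exists_isClopen_subset (hloc : ∀ x : X, ∃ U ∈ 𝓝 x, IsSigmaCompact (closure U))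
    {x : X} {W : Set X} (hW : IsOpen W) (hxW : x ∈ W) : ∃ V, IsClopen V ∧ x ∈ V ∧ V ⊆ W := by
  obtain ⟨N, hN, K, hKc, hKN⟩ := hloc x
  obtain ⟨V₀, Z₀, h₀, hV₀⟩ := hX.exists_isCollaredNhd x (hW.inter isOpen_interior)
    ⟨hxW, mem_interior_iff_mem_nhds.mpr hN⟩
  choose! V' Z' hcol hV hVZ hZ hVK hZK using
    fun (s : Set X × Set X) (n : ℕ) (hs : IsCollaredNhd x s.1 s.2) =>
      hX.exists_isCollaredNhd_shrink hs (hKc n)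
  let s : ℕ → Set X × Set X := fun n => Nat.rec (V₀, Z₀) (fun n s => (V' s n, Z' s n)) n
  have hs : ∀ n, IsCollaredNhd x (s n).1 (s n).2 := fun n =>
    Nat.rec h₀ (fun n ih => hcol (s n) n ih) n
  have hV₁ : (s 1).1 ⊆ W ∩ interior N :=
    (hV (s 0) 0 h₀).trans (subset_closure.trans hV₀)
  refine ⟨⋂ n, (s (n + 1)).1, ?_, mem_iInter.mpr fun n => (hs (n + 1)).2.1,
    (iInter_subset _ 0).trans (hV₁.trans inter_subset_left)⟩
  refine isClopen_iInter_of_frontier_disjoint (L := K) (fun n => (hs (n + 1)).1)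
    (antitone_nat_of_succ_le fun n => hV (s (n + 1)) (n + 1) (hs (n + 1)))
    (antitone_nat_of_succ_le fun n => hZ (s (n + 1)) (n + 1) (hs (n + 1)))
    (fun n => hVZ (s (n + 1)) (n + 1) (hs (n + 1))) ?_
    (fun n => hVK (s n) n (hs n)) (fun n => hZK (s n) n (hs n))
  rw [hKN]
  exact closure_mono (hV₁.trans (inter_subset_right.trans interior_subset))

end HasCompactFrontierNhdsAvoiding

end

structure IsRectifiable {G : Type*} [TopologicalSpace G] (e : G) (p q : G × G → G) : Prop where
  continuous_p : Continuous p
  continuous_q : Continuous q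
  p_q : ∀ x y, p (x, q (x, y)) = y
  q_p : ∀ x y, q (x, p (x, y)) = y
  q_self : ∀ x, q (x, x) = e

namespace IsRectifiable

variable {G : Type*} [TopologicalSpace G] {e : G} {p q : G × G → G} (hG : IsRectifiable e p q)
include hG

theorem p_e (x : G) : p (x, e) = x := by
  simpa only [hG.q_self] using hG.p_q x x

theorem exists_homeomorph_apply_eq (x y : G) : ∃ f : G ≃ₜ G, f x = y := by
  have hp := hG.continuous_p
  have hq := hG.continuous_q
  refine ⟨{
    toFun := fun z => p (y, q (x, z))
    invFun := fun z => p (x, q (y, z))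
    left_inv := fun z => by simp only [hG.q_p, hG.p_q]
    right_inv := fun z => by simp only [hG.q_p, hG.p_q]
    continuous_toFun := by fun_prop
    continuous_invFun := by fun_prop }, ?_⟩
  simp only [Homeomorph.homeomorph_mk_coe, Equiv.coe_fn_mk, hG.q_self, hG.p_e]

theorem regularSpace : RegularSpace G := by
  have hp := hG.continuous_p
  have hq := hG.continuous_q
  refine .of_exists_mem_nhds_isClosed_subset fun x s hs => ?_
  have hcont : Continuous fun bc : G × G => p (p (x, bc.1), bc.2) := by fun_prop
  have hs' : s ∈ 𝓝 (p (p (x, e), e)) := by rwa [hG.p_e, hG.p_e]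
  obtain ⟨O₁, hO₁, O₂, hO₂, hOs⟩ :=
    mem_nhds_prod_iff.mp (hcont.continuousAt (x := (e, e)) |>.preimage_mem_nhds hs')
  set O := O₁ ∩ O₂
  have hO : O ∈ 𝓝 e := inter_mem hO₁ hO₂
  have hT : {y | q (x, y) ∈ O} ∈ 𝓝 x := by
    refine (Continuous.continuousAt (by fun_prop)).preimage_mem_nhds ?_
    rwa [hG.q_self]
  refine ⟨closure {y | q (x, y) ∈ O}, mem_of_superset hT subset_closure, isClosed_closure,
    fun y hy => ?_⟩
  have hTy : {a | q (a, y) ∈ O} ∈ 𝓝 y := by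
    refine (Continuous.continuousAt (by fun_prop)).preimage_mem_nhds ?_
    rwa [hG.q_self]
  obtain ⟨a, hay, hxa⟩ := mem_closure_iff_nhds.mp hy _ hTy
  -- `y = p (p (x, q (x, a)), q (a, y))`, with both `q`-values in `O`.
  simpa only [mem_preimage, hG.p_q] using hOs (mk_mem_prod hxa.1 hay.2)

theorem image_prod_frontier_mem_nhds {U C : Set G} (hU : IsOpen U) (hC : IsPreconnected C)
    {a b : G} (ha : a ∈ C) (hb : b ∈ C) (heU : e ∈ U) (hbU : q (b, a) ∉ closure U) :
    p '' (C ×ˢ frontier U) ∈ 𝓝 a := by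
  have hq := hG.continuous_q
  have hO : IsOpen {u | q (a, u) ∈ U ∧ q (b, u) ∈ (closure U)ᶜ} :=
    (hU.preimage (by fun_prop)).inter (isClosed_closure.isOpen_compl.preimage (by fun_prop))
  refine mem_of_superset (hO.mem_nhds ⟨by rwa [hG.q_self], hbU⟩) fun u ⟨hau, hbu⟩ => ?_
  have hD : IsPreconnected ((fun w => q (w, u)) '' C) :=
    hC.image _ (show Continuous fun w => q (w, u) by fun_prop).continuousOn
  obtain ⟨d, ⟨w, hw, rfl⟩, hd⟩ := hD.inter_frontier_nonempty ⟨_, mem_image_of_mem _ ha, hau⟩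
    ⟨_, mem_image_of_mem _ hb, fun h => hbu (subset_closure h)⟩
  exact ⟨(w, q (w, u)), mk_mem_prod hw hd, hG.p_q w u⟩

theorem isTotallyDisconnected_of_isCompact [T2Space G] {𝓑 : Set (Set G)}
    (hB : IsTopologicalBasis 𝓑) (hbc : ∀ U ∈ 𝓑, IsCompact (frontier U))
    (hnc : ∀ x : G, ∀ C ∈ 𝓝 x, ¬IsCompact C) {K : Set G} (hK : IsCompact K) :
    IsTotallyDisconnected K := by
  have := hG.regularSpace
  intro t htK ht a ha b hb
  by_contra hab
  have hba : q (b, a) ≠ e := fun h => hab (by rw [← hG.p_q b a, h, hG.p_e])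
  obtain ⟨U, hU𝓑, heU, hUba⟩ :=
    hB.exists_closure_subset (isClosed_singleton.isOpen_compl.mem_nhds hba.symm)
  have hcl : IsCompact (closure t) := hK.of_isClosed_subset isClosed_closure
    (hK.isClosed.closure_subset_iff.mpr htK)
  exact hnc a _ (hG.image_prod_frontier_mem_nhds (hB.isOpen hU𝓑) ht.closure
    (subset_closure ha) (subset_closure hb) heU (fun h => hUba h rfl))
    ((hcl.prod (hbc U hU𝓑)).image hG.continuous_p)

end IsRectifiable

/-- Every locally σ-compact Hausdorff rectifiable space with a bc-base is
locally compact or zero-dimensional. -/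
theorem locallyCompact_or_zeroDim_of_locally_sigmaCompact_bcBase
    {G : Type*} [TopologicalSpace G] [T2Space G] (e : G) (p q : G × G → G)
    (hp : Continuous p) (hq : Continuous q)
    (hpq : ∀ x y : G, p (x, q (x, y)) = y)
    (hqp : ∀ x y : G, q (x, p (x, y)) = y)
    (hqe : ∀ x : G, q (x, x) = e)
    (hloc : ∀ x : G, ∃ U ∈ nhds x, IsSigmaCompact (closure U))
    (𝓑 : Set (Set G)) (hbase : TopologicalSpace.IsTopologicalBasis 𝓑)
    (hbc : ∀ U ∈ 𝓑, IsCompact (closure U \ U)) :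
    LocallyCompactSpace G ∨
      ∀ (x : G) (W : Set G), IsOpen W → x ∈ W →
        ∃ V : Set G, IsClopen V ∧ x ∈ V ∧ V ⊆ W := by
  have hG : IsRectifiable e p q := ⟨hp, hq, hpq, hqp, hqe⟩
  by_cases hcpt : ∃ x : G, ∃ C ∈ nhds x, IsCompact C
  · obtain ⟨x, C, hCx, hC⟩ := hcpt
    have := weaklyLocallyCompactSpace_of_homogeneous hG.exists_homeomorph_apply_eq hC hCx
    exact Or.inl inferInstance
  · push Not at hcpt
    have := hG.regularSpace
    have hfr : ∀ U ∈ 𝓑, IsCompact (frontier U) := fun U hU =>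
      (hbase.isOpen hU).frontier_eq ▸ hbc U hU
    have hX : HasCompactFrontierNhdsAvoiding G :=
      hasCompactFrontierNhdsAvoiding_of_isTopologicalBasis hbase hfr fun _ hK =>
        hG.isTotallyDisconnected_of_isCompact hbase hfr hcpt hK
    exact Or.inr fun x W hW hxW => hX.exists_isClopen_subset hloc hW hxW
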